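/- In any (p,d)-branching mobile (p ≥ d ≥ 3), the excess, defined as the number of edges plus the number of white-white edges minus the number of buds, equals d. -/

import Mathlib

open Finset

/-- A combinatorial model of a weighted mobile: a finite plane tree with vertices colored
black (`black v = true`) or white, a number `buds v` of dangling buds at each (black)
vertex, and an ℕ-weight on each of the two half-edges of each edge.  The ℕ-mobile
conditions require weights to be positive at white endpoints and zero at black
endpoints. -/
structure Mobile where
  V : Type
  E : Type
  [fintypeV : Fintype V]
  [fintypeE : Fintype E]
  [decV : DecidableEq V]
  [decE : DecidableEq E]
  ends : E → V × V
  black : V → Bool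
  buds : V → ℕ
  w : E → ℕ × ℕ
  connected : ∀ x y : V,
    Relation.ReflTransGen (fun a b => ∃ e, ends e = (a, b) ∨ ends e = (b, a)) x y
  treeCard : Fintype.card V = Fintype.card E + 1
  budsOnlyBlack : ∀ v, black v = false → buds v = 0
  posWhite : ∀ e, (black (ends e).1 = false → 0 < (w e).1) ∧
    (black (ends e).2 = false → 0 < (w e).2)
  zeroBlack : ∀ e, (black (ends e).1 = true → (w e).1 = 0) ∧
    (black (ends e).2 = true → (w e).2 = 0)

attribute [instance] Mobile.fintypeV Mobile.fintypeE Mobile.decV Mobile.decE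

/-- Degree of a vertex, counting buds. -/
def Mobile.degree (M : Mobile) (v : M.V) : ℕ :=
  M.buds v + ∑ e : M.E, ((if (M.ends e).1 = v then 1 else 0) +
    (if (M.ends e).2 = v then 1 else 0))

/-- Weight of a vertex: sum of the weights of its incident (non-bud) half-edges. -/
def Mobile.vertexWeight (M : Mobile) (v : M.V) : ℕ :=
  ∑ e : M.E, ((if (M.ends e).1 = v then (M.w e).1 else 0) +
    (if (M.ends e).2 = v then (M.w e).2 else 0))

/-- Weight of an edge: sum of the weights of its two half-edges. -/
def Mobile.edgeWeight (M : Mobile) (e : M.E) : ℕ := (M.w e).1 + (M.w e).2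

/-- Number of edges. -/
def Mobile.numEdges (M : Mobile) : ℕ := Fintype.card M.E

/-- Number of white-white edges. -/
def Mobile.numWW (M : Mobile) : ℕ :=
  (univ.filter (fun e : M.E =>
    M.black (M.ends e).1 = false ∧ M.black (M.ends e).2 = false)).card

/-- Total number of buds. -/
def Mobile.numBuds (M : Mobile) : ℕ := ∑ v : M.V, M.buds v

/-- Number of black vertices. -/
def Mobile.numBlack (M : Mobile) : ℕ := (univ.filter (fun v : M.V => M.black v = true)).card

/-- Number of white vertices. -/
def Mobile.numWhite (M : Mobile) : ℕ := (univ.filter (fun v : M.V => M.black v = false)).card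

/-- The excess of a mobile: number of edges plus number of white-white edges minus the
number of buds. -/
def Mobile.excess (M : Mobile) : ℤ :=
  (M.numEdges : ℤ) + (M.numWW : ℤ) - (M.numBuds : ℤ)

/-- A `d`-branching mobile: every black vertex has degree `d`, every white vertex has
weight `d`, and every edge has weight `d - 2`. -/
def Mobile.IsDBranching (M : Mobile) (d : ℕ) : Prop :=
  (∀ v, M.black v = true → M.degree v = d) ∧
  (∀ v, M.black v = false → M.vertexWeight v = d) ∧
  (∀ e, M.edgeWeight e = d - 2)

/-- Adjacency in a mobile. -/
def Mobile.Adj (M : Mobile) (x y : M.V) : Prop :=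
  ∃ e, M.ends e = (x, y) ∨ M.ends e = (y, x)

instance (M : Mobile) (s : M.V) : DecidablePred (fun v => M.Adj v s) := fun v => by
  unfold Mobile.Adj; infer_instance

/-!
Double counting. Every edge has positive weight while black half-edges weigh nothing, so there is
no black-black edge; counting half-edges at black vertices then gives
`excess = 2E - ∑_{v black} deg v = 2E - p - (B - 1) d`. A mobile is a tree, so it has neither
loops nor multiple edges and `s` has exactly `p` neighbours, all white; counting weights at white
vertices gives `E (d - 2) = (p d - p - d) + (W - p) d`. Eliminating `W` with `B + W = E + 1`
leaves `excess = d`.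
-/

namespace Mobile

variable (M : Mobile)

def graph : SimpleGraph M.V := SimpleGraph.fromRel fun a b => ∃ e, M.ends e = (a, b)

instance : DecidableRel M.graph.Adj := fun a b =>
  inferInstanceAs
    (Decidable (a ≠ b ∧ ((∃ e, M.ends e = (a, b)) ∨ ∃ e, M.ends e = (b, a))))

def sym2Ends (e : M.E) : Sym2 M.V := s((M.ends e).1, (M.ends e).2)

theorem graph_connected : M.graph.Connected := by
  have : Nonempty M.V := Fintype.card_pos_iff.mp (by rw [M.treeCard]; omega)
  refine ⟨fun x y => (SimpleGraph.reachable_iff_reflTransGen x y).2 ?_⟩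
  refine Relation.ReflTransGen.lift' (p := M.graph.Adj) id ?_ x y (M.connected x y)
  rintro a b ⟨e, he⟩
  by_cases hab : a = b
  · exact hab ▸ Relation.ReflTransGen.refl
  · exact .single ⟨hab, he.imp (⟨e, ·⟩) (⟨e, ·⟩)⟩

theorem edgeFinset_graph_subset : M.graph.edgeFinset ⊆ univ.image M.sym2Ends := by
  intro x hx
  induction x with
  | _ a b =>
    obtain ⟨-, ⟨e, he⟩ | ⟨e, he⟩⟩ := SimpleGraph.mem_edgeFinset.1 hx
    · exact mem_image.2 ⟨e, mem_univ e, by simp [sym2Ends, he]⟩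
    · exact mem_image.2 ⟨e, mem_univ e, by simp [sym2Ends, he, Sym2.eq_swap]⟩

theorem card_edgeFinset_graph : #M.graph.edgeFinset = Fintype.card M.E := by
  have hconn := M.graph_connected.card_vert_le_card_edgeSet_add_one
  rw [Nat.card_eq_fintype_card, M.treeCard, Nat.card_eq_fintype_card,
    ← SimpleGraph.edgeFinset_card, add_le_add_iff_right] at hconn
  exact le_antisymm ((card_le_card M.edgeFinset_graph_subset).trans card_image_le) hconn

theorem edgeFinset_graph_eq_image : M.graph.edgeFinset = univ.image M.sym2Ends :=
  eq_of_subset_of_card_le M.edgeFinset_graph_subset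
    (card_image_le.trans M.card_edgeFinset_graph.ge)

theorem sym2Ends_injective : Function.Injective M.sym2Ends := by
  have h : #(univ.image M.sym2Ends) = #(univ : Finset M.E) := by
    rw [← edgeFinset_graph_eq_image, card_edgeFinset_graph, card_univ]
  rw [card_image_iff, coe_univ] at h
  exact Set.injOn_univ.1 h

theorem ends_fst_ne_snd (e : M.E) : (M.ends e).1 ≠ (M.ends e).2 := by
  have he : M.sym2Ends e ∈ M.graph.edgeFinset := by
    rw [M.edgeFinset_graph_eq_image]
    exact mem_image_of_mem _ (mem_univ e)
  exact M.graph.ne_of_adj (SimpleGraph.mem_edgeFinset.1 he)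

theorem graph_adj_iff {u v : M.V} : M.graph.Adj u v ↔ M.Adj u v := by
  refine ⟨fun ⟨_, h⟩ => ?_, fun ⟨e, he⟩ => ⟨?_, he.imp (⟨e, ·⟩) (⟨e, ·⟩)⟩⟩
  · obtain ⟨e, he⟩ | ⟨e, he⟩ := h
    exacts [⟨e, .inl he⟩, ⟨e, .inr he⟩]
  · rintro rfl
    exact M.ends_fst_ne_snd e (by rcases he with he | he <;> simp [he])

theorem degree_eq_buds_add_degree_graph (v : M.V) : M.degree v = M.buds v + M.graph.degree v := by
  have hincident : ∀ e,
      (if (M.ends e).1 = v then 1 else 0) + (if (M.ends e).2 = v then 1 else 0) =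
        if v ∈ M.sym2Ends e then 1 else 0 := by
    intro e
    have := M.ends_fst_ne_snd e
    by_cases h1 : (M.ends e).1 = v <;> by_cases h2 : (M.ends e).2 = v <;>
      simp_all [sym2Ends, eq_comm]
  rw [degree, sum_congr rfl fun e _ => hincident e, sum_boole, Nat.cast_id,
    ← SimpleGraph.card_incidenceFinset_eq_degree, SimpleGraph.incidenceFinset_eq_filter,
    M.edgeFinset_graph_eq_image, filter_image,
    card_image_of_injective _ M.sym2Ends_injective]

theorem card_filter_adj_add_buds (v : M.V) :
    #(univ.filter fun u => M.Adj u v) + M.buds v = M.degree v := by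
  have hneighbors : univ.filter (fun u => M.Adj u v) = M.graph.neighborFinset v := by
    ext u
    simp only [mem_filter, mem_univ, true_and, SimpleGraph.mem_neighborFinset, graph_adj_iff,
      Adj, or_comm]
  rw [hneighbors, SimpleGraph.card_neighborFinset_eq_degree, add_comm,
    degree_eq_buds_add_degree_graph]

theorem vertexWeight_eq_zero_of_black {v : M.V} (hv : M.black v = true) : M.vertexWeight v = 0 :=
  sum_eq_zero fun e _ => by
    have := M.zeroBlack e
    split_ifs with h1 h2 h2 <;> simp_all

theorem sum_vertexWeight_eq_sum_edgeWeight :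
    ∑ v, M.vertexWeight v = ∑ e, M.edgeWeight e := by
  unfold vertexWeight edgeWeight
  rw [sum_comm]
  refine sum_congr rfl fun e _ => ?_
  rw [sum_add_distrib, sum_ite_eq, sum_ite_eq]
  simp

theorem black_fst_eq_false_or_black_snd_eq_false {e : M.E} (he : 0 < M.edgeWeight e) :
    M.black (M.ends e).1 = false ∨ M.black (M.ends e).2 = false := by
  have := M.zeroBlack e
  unfold edgeWeight at he
  cases h1 : M.black (M.ends e).1 <;> cases h2 : M.black (M.ends e).2 <;> simp_all

theorem sum_degree_black : ∑ v ∈ univ.filter (fun v => M.black v = true), M.degree v =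
    M.numBuds + ∑ e, ((if M.black (M.ends e).1 = true then 1 else 0) +
      (if M.black (M.ends e).2 = true then 1 else 0)) := by
  unfold degree numBuds
  rw [sum_add_distrib, sum_comm]
  congr 1
  · refine sum_subset (subset_univ _) fun v _ hv => M.budsOnlyBlack v ?_
    simpa using hv
  · refine sum_congr rfl fun e _ => ?_
    rw [sum_add_distrib, sum_ite_eq, sum_ite_eq]
    simp

/-- With no black-black edge, every edge carries one black half-edge unless it is white-white. -/
theorem excess_add_sum_degree_black
    (hBB : ∀ e, M.black (M.ends e).1 = false ∨ M.black (M.ends e).2 = false) :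
    M.excess + ∑ v ∈ univ.filter (fun v => M.black v = true), (M.degree v : ℤ) =
      2 * M.numEdges := by
  have hedges : ∑ e, ((if M.black (M.ends e).1 = true then 1 else 0) +
      (if M.black (M.ends e).2 = true then 1 else 0)) + M.numWW = M.numEdges := by
    rw [numWW, numEdges, card_filter, ← sum_add_distrib, ← card_univ, card_eq_sum_ones]
    refine sum_congr rfl fun e _ => ?_
    have := hBB e
    cases h1 : M.black (M.ends e).1 <;> cases h2 : M.black (M.ends e).2 <;> simp_all
  rw [← Nat.cast_sum, sum_degree_black, excess, ← hedges]
  push_cast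
  ring

theorem numBlack_add_numWhite : M.numBlack + M.numWhite = M.numEdges + 1 := by
  rw [numBlack, numWhite, numEdges, ← M.treeCard, ← card_univ,
    ← card_filter_add_card_filter_not (s := univ) (fun v => M.black v = true)]
  simp

theorem sum_vertexWeight_add_mul_card {d : ℕ} (A : Finset M.V)
    (hA : ∀ v ∈ A, M.black v = false)
    (hweight : ∀ v, M.black v = false → v ∉ A → M.vertexWeight v = d) :
    ∑ v, M.vertexWeight v + d * #A = ∑ v ∈ A, M.vertexWeight v + d * M.numWhite := by
  set white := univ.filter fun v => M.black v = false
  have hAwhite : A ⊆ white := fun v hv => by simpa [white] using hA v hv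
  have hwhite : ∑ v, M.vertexWeight v = ∑ v ∈ white, M.vertexWeight v :=
    (sum_subset (subset_univ _) fun v _ hv =>
      M.vertexWeight_eq_zero_of_black (by simpa [white] using hv)).symm
  have hrest : ∑ v ∈ white \ A, M.vertexWeight v = d * #(white \ A) := by
    rw [sum_congr rfl fun v hv => hweight v (by simp_all [white]) (mem_sdiff.1 hv).2,
      sum_const, smul_eq_mul, mul_comm]
  rw [hwhite, ← sum_sdiff hAwhite, hrest, numWhite, ← card_sdiff_add_card_eq_card hAwhite]
  ring

theorem sum_degree_black_add {s : M.V} (hs : M.black s = true) {d : ℕ}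
    (hblack : ∀ v, v ≠ s → M.black v = true → M.degree v = d) :
    ∑ v ∈ univ.filter (fun v => M.black v = true), M.degree v + d =
      M.degree s + d * M.numBlack := by
  have hmem : s ∈ univ.filter fun v => M.black v = true := by simpa using hs
  have hpos : 0 < M.numBlack := card_pos.2 ⟨s, hmem⟩
  rw [← add_sum_erase _ _ hmem, sum_congr rfl fun v hv => hblack v (ne_of_mem_erase hv)
    (mem_filter.1 (mem_of_mem_erase hv)).2, sum_const, card_erase_of_mem hmem, smul_eq_mul,
    add_assoc, ← Nat.succ_mul, Nat.succ_eq_add_one, ← numBlack, Nat.sub_add_cancel hpos,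
    mul_comm]

end Mobile

/-- In any `(p,d)`-branching mobile (`p ≥ d ≥ 3`), the excess equals
`d`.  A `(p,d)`-branching mobile is an ℕ-mobile in which every edge has weight `d-2`,
every black vertex has degree `d` except one special black vertex `s` of degree `p`
with no buds, every neighbor of `s` is white, every white vertex not adjacent to `s`
has weight `d`, and the weights of the neighbors of `s` sum to `pd - p - d`. -/
theorem stmt8 (M : Mobile) (p d : ℕ) (hd : 3 ≤ d) (hdp : d ≤ p) (s : M.V)
    (hsblack : M.black s = true)
    (hsdeg : M.degree s = p) (hsbuds : M.buds s = 0)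
    (hblack : ∀ v, v ≠ s → M.black v = true → M.degree v = d)
    (hneighwhite : ∀ v, M.Adj v s → M.black v = false)
    (hwhite : ∀ v, M.black v = false → ¬ M.Adj v s → M.vertexWeight v = d)
    (hneigh : ∑ v ∈ univ.filter (fun v => M.Adj v s), M.vertexWeight v = p * d - p - d)
    (hedge : ∀ e, M.edgeWeight e = d - 2) :
    M.excess = (d : ℤ) := by
  have hexcess := M.excess_add_sum_degree_black fun e =>
    M.black_fst_eq_false_or_black_snd_eq_false (by rw [hedge]; omega)
  have hdegree := M.sum_degree_black_add hsblack hblack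
  have hneighbors : #(univ.filter fun v => M.Adj v s) = p := by
    have := M.card_filter_adj_add_buds s
    omega
  have hweight := M.sum_vertexWeight_add_mul_card (univ.filter fun v => M.Adj v s)
    (fun v hv => hneighwhite v (mem_filter.1 hv).2) fun v hv hns => hwhite v hv (by simpa using hns)
  rw [M.sum_vertexWeight_eq_sum_edgeWeight, sum_congr rfl fun e _ => hedge e, sum_const,
    card_univ, ← Mobile.numEdges, smul_eq_mul, hneigh, hneighbors] at hweight
  have hcount := M.numBlack_add_numWhite
  have hpd : p + d ≤ p * d := by nlinarith
  rw [hsdeg] at hdegree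
  zify [(by omega : 2 ≤ d), hpd, Nat.sub_sub] at hexcess hdegree hweight hcount
  linear_combination hexcess - hdegree - (d : ℤ) * hcount - hweight
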